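/- Let V be a real vector space with hypercomplex structure (J₁,J₂,J₃) and pseudo-Hermitian metric g of the above compatibility type, dim V = 4n finite. Then the signature of g is (2n, 2n). -/

import Mathlib

open Module

section helpers

lemma orth_li {V : Type*} [AddCommGroup V] [Module ℝ V] {ι : Type*} [Fintype ι]
    (g : V →ₗ[ℝ] V →ₗ[ℝ] ℝ) (f : ι → V)
    (hne : ∀ i, g (f i) (f i) ≠ 0)
    (ho : ∀ i j, i ≠ j → g (f i) (f j) = 0) :
    LinearIndependent ℝ f := by
  rw [Fintype.linearIndependent_iff]
  intro c hc j
  have h0 : g (f j) (∑ i, c i • f i) = c j * g (f j) (f j) := by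
    rw [map_sum, Finset.sum_eq_single j]
    · simp [mul_comm]
    · intro i _ hij
      simp [ho j i (Ne.symm hij)]
    · simp
  rw [hc] at h0
  simp only [map_zero] at h0
  rcases mul_eq_zero.mp h0.symm with h | h
  · exact h
  · exact absurd h (hne j)

lemma exists_t' (r : ℝ) (hr : 0 ≤ r) : ∃ t : ℝ, 0 < t ∧ t ^ 2 * r + 2 * t = 1 := by
  set s := Real.sqrt (1 + r) with hs
  have hs2 : s ^ 2 = 1 + r := Real.sq_sqrt (by linarith)
  have hs0 : 0 < s := Real.sqrt_pos.mpr (by linarith)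
  refine ⟨(1 + s)⁻¹, by positivity, ?_⟩
  have h1s : (1 : ℝ) + s ≠ 0 := by positivity
  field_simp
  nlinarith [hs2]

variable {V : Type*} [AddCommGroup V] [Module ℝ V]

lemma exists_unit (J₂ : V →ₗ[ℝ] V) (g : V →ₗ[ℝ] V →ₗ[ℝ] ℝ)
    (hgsym : ∀ x y, g x y = g y x)
    (hnondeg : ∀ x, (∀ y, g x y = 0) → x = 0)
    (hg₂ : ∀ x y, g (J₂ x) (J₂ y) = -g x y)
    [Nontrivial V] :
    ∃ x, g x x = 1 := by
  have h1 : ∃ w, g w w ≠ 0 := by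
    by_contra h
    push_neg at h
    have hzero : ∀ x y, g x y = 0 := by
      intro x y
      have hxy := h (x + y)
      have hsy := hgsym y x
      simp only [map_add, LinearMap.add_apply, h x, h y] at hxy
      linarith
    obtain ⟨x, hx⟩ := exists_ne (0 : V)
    exact hx (hnondeg x (hzero x))
  obtain ⟨w, hw⟩ := h1
  have h2 : ∃ v, 0 < g v v := by
    rcases hw.lt_or_gt with h | h
    · exact ⟨J₂ w, by rw [hg₂]; linarith⟩
    · exact ⟨w, h⟩
  obtain ⟨v, hv⟩ := h2
  refine ⟨(Real.sqrt (g v v))⁻¹ • v, ?_⟩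
  have hs : Real.sqrt (g v v) * Real.sqrt (g v v) = g v v := Real.mul_self_sqrt hv.le
  have hne : Real.sqrt (g v v) ≠ 0 := by positivity
  simp only [map_smul, LinearMap.smul_apply, smul_eq_mul]
  field_simp
  rw [sq, hs]

lemma exists_good (J₁ J₂ J₃ : V →ₗ[ℝ] V) (g : V →ₗ[ℝ] V →ₗ[ℝ] ℝ)
    (h₁ : ∀ x, J₁ (J₁ x) = -x)
    (h₂ : ∀ x, J₂ (J₂ x) = -x)
    (h₃ : ∀ x, J₃ (J₃ x) = -x)
    (h₃₁₂ : ∀ x, J₃ x = J₁ (J₂ x))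
    (a₂₃ : ∀ x, J₂ (J₃ x) = -J₃ (J₂ x))
    (hgsym : ∀ x y, g x y = g y x)
    (hg₁ : ∀ x y, g (J₁ x) (J₁ y) = g x y)
    (hg₂ : ∀ x y, g (J₂ x) (J₂ y) = -g x y)
    (hg₃ : ∀ x y, g (J₃ x) (J₃ y) = -g x y)
    (x : V) (hx : g x x = 1) :
    ∃ e, g e e = 1 ∧ g e (J₂ e) = 0 ∧ g e (J₃ e) = 0 := by
  have adj1 : ∀ a b, g (J₁ a) b = -g a (J₁ b) := by
    intro a b; have h := hg₁ a (J₁ b); rw [h₁ b, map_neg] at h; linarith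
  have adj2 : ∀ a b, g (J₂ a) b = g a (J₂ b) := by
    intro a b; have h := hg₂ a (J₂ b); rw [h₂ b, map_neg] at h; linarith
  have adj3 : ∀ a b, g (J₃ a) b = g a (J₃ b) := by
    intro a b; have h := hg₃ a (J₃ b); rw [h₃ b, map_neg] at h; linarith
  have f3 : ∀ a, J₃ (J₂ a) = -J₁ a := by
    intro a; rw [h₃₁₂ (J₂ a), h₂ a, map_neg]
  have f2 : ∀ a, J₂ (J₃ a) = J₁ a := by
    intro a; rw [a₂₃ a, f3 a, neg_neg]
  have f6 : ∀ a, J₁ (J₃ a) = -J₂ a := by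
    intro a; rw [h₃₁₂ a, h₁ (J₂ a)]
  set α := g x (J₂ x) with hα
  set β := g x (J₃ x) with hβ
  have e01 : g x (J₁ x) = 0 := by
    have h1 := adj1 x x; have h2 := hgsym (J₁ x) x; linarith
  have e10 : g (J₁ x) x = 0 := by rw [hgsym]; exact e01
  have e11 : g (J₁ x) (J₁ x) = 1 := by rw [hg₁]; exact hx
  have e22 : g (J₂ x) (J₂ x) = -1 := by rw [hg₂, hx]
  have e33 : g (J₃ x) (J₃ x) = -1 := by rw [hg₃, hx]
  have e12 : g (J₁ x) (J₂ x) = -β := by rw [adj1, ← h₃₁₂]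
  have e21 : g (J₂ x) (J₁ x) = -β := by rw [hgsym]; exact e12
  have e13 : g (J₁ x) (J₃ x) = α := by rw [adj1, f6, map_neg, neg_neg]
  have e31 : g (J₃ x) (J₁ x) = α := by rw [hgsym]; exact e13
  have e23 : g (J₂ x) (J₃ x) = 0 := by rw [adj2, f2]; exact e01
  have e32 : g (J₃ x) (J₂ x) = 0 := by rw [hgsym]; exact e23
  have e20 : g (J₂ x) x = α := by rw [hgsym]
  have e30 : g (J₃ x) x = β := by rw [hgsym]
  obtain ⟨t, ht0, ht⟩ := exists_t' (α ^ 2 + β ^ 2) (by positivity)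
  set u := x + (t * α) • J₂ x + (t * β) • J₃ x with hu
  have hJ₂u : J₂ u = J₂ x + (t * α) • (-x) + (t * β) • J₁ x := by
    rw [hu]; simp only [map_add, map_smul, h₂, f2]
  have hJ₃u : J₃ u = J₃ x + (t * α) • (-J₁ x) + (t * β) • (-x) := by
    rw [hu]; simp only [map_add, map_smul, f3, h₃]
  have huu : g u u = 2 * t * (1 + (α ^ 2 + β ^ 2)) := by
    rw [hu]
    simp only [map_add, map_smul, map_neg, LinearMap.add_apply, LinearMap.smul_apply,
      LinearMap.neg_apply, smul_eq_mul, hx, e01, e10, e11, e12, e13, e20, e21, e22, e23,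
      e30, e31, e32, e33]
    linear_combination (-1 : ℝ) * ht
  have hu2 : g u (J₂ u) = 0 := by
    rw [hJ₂u, hu]
    simp only [map_add, map_smul, map_neg, LinearMap.add_apply, LinearMap.smul_apply,
      LinearMap.neg_apply, smul_eq_mul, hx, e01, e10, e11, e12, e13, e20, e21, e22, e23,
      e30, e31, e32, e33]
    linear_combination (-α) * ht
  have hu3 : g u (J₃ u) = 0 := by
    rw [hJ₃u, hu]
    simp only [map_add, map_smul, map_neg, LinearMap.add_apply, LinearMap.smul_apply,
      LinearMap.neg_apply, smul_eq_mul, hx, e01, e10, e11, e12, e13, e20, e21, e22, e23,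
      e30, e31, e32, e33]
    linear_combination (-β) * ht
  have hupos : 0 < g u u := by rw [huu]; positivity
  refine ⟨(Real.sqrt (g u u))⁻¹ • u, ?_, ?_, ?_⟩
  · have hs : Real.sqrt (g u u) * Real.sqrt (g u u) = g u u := Real.mul_self_sqrt hupos.le
    have hne : Real.sqrt (g u u) ≠ 0 := by positivity
    simp only [map_smul, LinearMap.smul_apply, smul_eq_mul]
    field_simp
    rw [sq, hs]
  · simp only [map_smul, LinearMap.smul_apply, smul_eq_mul, hu2, mul_zero]
  · simp only [map_smul, LinearMap.smul_apply, smul_eq_mul, hu3, mul_zero]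

end helpers

universe u

set_option maxHeartbeats 2000000 in
theorem aux_sig : ∀ (n : ℕ) (V : Type u) [AddCommGroup V] [Module ℝ V]
    [FiniteDimensional ℝ V],
    Module.finrank ℝ V = 4 * n →
    ∀ (J₁ J₂ J₃ : V →ₗ[ℝ] V),
    (∀ x, J₁ (J₁ x) = -x) →
    (∀ x, J₂ (J₂ x) = -x) →
    (∀ x, J₃ (J₃ x) = -x) →
    (∀ x, J₁ (J₂ x) = -J₂ (J₁ x)) →
    (∀ x, J₁ (J₃ x) = -J₃ (J₁ x)) →
    (∀ x, J₂ (J₃ x) = -J₃ (J₂ x)) →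
    (∀ x, J₃ x = J₁ (J₂ x)) →
    ∀ (g : V →ₗ[ℝ] V →ₗ[ℝ] ℝ),
    (∀ x y, g x y = g y x) →
    (∀ x, (∀ y, g x y = 0) → x = 0) →
    (∀ x y, g (J₁ x) (J₁ y) = g x y) →
    (∀ x y, g (J₂ x) (J₂ y) = -g x y) →
    (∀ x y, g (J₃ x) (J₃ y) = -g x y) →
    ∃ b : Basis (Fin (2 * n) ⊕ Fin (2 * n)) ℝ V,
      (∀ i j, i ≠ j → g (b i) (b j) = 0) ∧
      (∀ i, g (b (Sum.inl i)) (b (Sum.inl i)) = 1) ∧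
      (∀ i, g (b (Sum.inr i)) (b (Sum.inr i)) = -1) := by
  intro n
  induction n with
  | zero =>
    intro V _ _ _ hdim J₁ J₂ J₃ h₁ h₂ h₃ a₁₂ a₁₃ a₂₃ h₃₁₂ g hgsym hnondeg hg₁ hg₂ hg₃
    haveI : Subsingleton V := by
      rw [← Module.finrank_zero_iff (R := ℝ)]
      simpa using hdim
    haveI : IsEmpty (Fin (2 * 0)) := ⟨fun i => absurd i.2 (by omega)⟩
    exact ⟨Basis.empty V, fun i => isEmptyElim i, fun i => isEmptyElim i,
      fun i => isEmptyElim i⟩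
  | succ n ih =>
    intro V _ _ _ hdim J₁ J₂ J₃ h₁ h₂ h₃ a₁₂ a₁₃ a₂₃ h₃₁₂ g hgsym hnondeg hg₁ hg₂ hg₃
    haveI : Nontrivial V := by
      apply Module.nontrivial_of_finrank_pos (R := ℝ)
      omega
    -- adjointness
    have adj1 : ∀ a b, g (J₁ a) b = -g a (J₁ b) := by
      intro a b; have h := hg₁ a (J₁ b); rw [h₁ b, map_neg] at h; linarith
    have adj2 : ∀ a b, g (J₂ a) b = g a (J₂ b) := by
      intro a b; have h := hg₂ a (J₂ b); rw [h₂ b, map_neg] at h; linarith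
    have adj3 : ∀ a b, g (J₃ a) b = g a (J₃ b) := by
      intro a b; have h := hg₃ a (J₃ b); rw [h₃ b, map_neg] at h; linarith
    -- composition rules
    have f3 : ∀ a, J₃ (J₂ a) = -J₁ a := by
      intro a; rw [h₃₁₂ (J₂ a), h₂ a, map_neg]
    have f2 : ∀ a, J₂ (J₃ a) = J₁ a := by
      intro a; rw [a₂₃ a, f3 a, neg_neg]
    have f6 : ∀ a, J₁ (J₃ a) = -J₂ a := by
      intro a; rw [h₃₁₂ a, h₁ (J₂ a)]
    have f5 : ∀ a, J₂ (J₁ a) = -J₃ a := by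
      intro a; have h := a₁₂ a; rw [← h₃₁₂ a] at h; rw [h, neg_neg]
    have f4 : ∀ a, J₃ (J₁ a) = J₂ a := by
      intro a; have h := a₁₃ a; rw [f6 a] at h; exact (neg_injective h).symm
    obtain ⟨x, hx⟩ := exists_unit J₂ g hgsym hnondeg hg₂
    obtain ⟨e, hee, he2, he3⟩ :=
      exists_good J₁ J₂ J₃ g h₁ h₂ h₃ h₃₁₂ a₂₃ hgsym hg₁ hg₂ hg₃ x hx
    -- Gram matrix of the quadruple e, J₁ e, J₂ e, J₃ e
    have he1 : g e (J₁ e) = 0 := by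
      have ha := adj1 e e; have hb := hgsym (J₁ e) e; linarith
    have G10 : g (J₁ e) e = 0 := by rw [hgsym]; exact he1
    have G20 : g (J₂ e) e = 0 := by rw [hgsym]; exact he2
    have G30 : g (J₃ e) e = 0 := by rw [hgsym]; exact he3
    have G11 : g (J₁ e) (J₁ e) = 1 := by rw [hg₁]; exact hee
    have G22 : g (J₂ e) (J₂ e) = -1 := by rw [hg₂, hee]
    have G33 : g (J₃ e) (J₃ e) = -1 := by rw [hg₃, hee]
    have G12 : g (J₁ e) (J₂ e) = 0 := by rw [adj1, ← h₃₁₂, he3, neg_zero]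
    have G21 : g (J₂ e) (J₁ e) = 0 := by rw [hgsym]; exact G12
    have G13 : g (J₁ e) (J₃ e) = 0 := by rw [adj1, f6, map_neg, he2]; ring
    have G31 : g (J₃ e) (J₁ e) = 0 := by rw [hgsym]; exact G13
    have G23 : g (J₂ e) (J₃ e) = 0 := by rw [adj2, f2]; exact he1
    have G32 : g (J₃ e) (J₂ e) = 0 := by rw [hgsym]; exact G23
    -- the orthogonal complement of the quadruple
    set q : Fin 4 → V := ![e, J₁ e, J₂ e, J₃ e] with hq
    set φ : V →ₗ[ℝ] (Fin 4 → ℝ) := LinearMap.pi (fun i => g (q i)) with hφ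
    set K : Submodule ℝ V := LinearMap.ker φ with hK
    have hKmem : ∀ y : V, y ∈ K ↔
        g e y = 0 ∧ g (J₁ e) y = 0 ∧ g (J₂ e) y = 0 ∧ g (J₃ e) y = 0 := by
      intro y
      constructor
      · intro h
        have h' : ∀ i, φ y i = 0 := fun i => congrFun (LinearMap.mem_ker.mp h) i
        refine ⟨?_, ?_, ?_, ?_⟩
        · simpa [hφ, hq] using h' 0
        · simpa [hφ, hq] using h' 1
        · simpa [hφ, hq] using h' 2
        · simpa [hφ, hq] using h' 3
      · rintro ⟨ha, hb, hc, hd⟩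
        rw [hK, LinearMap.mem_ker]
        funext i
        fin_cases i <;> simp [hφ, hq, ha, hb, hc, hd]
    have hsurj : Function.Surjective φ := by
      intro c
      refine ⟨c 0 • e + c 1 • J₁ e + (-(c 2)) • J₂ e + (-(c 3)) • J₃ e, ?_⟩
      funext i
      fin_cases i <;>
        simp [hφ, hq, map_add, map_smul, hee, he1, he2, he3, G10, G11, G12, G13,
          G20, G21, G22, G23, G30, G31, G32, G33]
    have hrank : Module.finrank ℝ K = 4 * n := by
      have h1 := LinearMap.finrank_range_add_finrank_ker φ
      rw [LinearMap.range_eq_top.mpr hsurj, finrank_top] at h1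
      have h2 : Module.finrank ℝ (Fin 4 → ℝ) = 4 := by simp
      rw [h2, hdim] at h1
      rw [← hK] at h1
      omega
    -- invariance of K under the complex structures
    have hJ₁K : ∀ y ∈ K, J₁ y ∈ K := by
      intro y hy
      rw [hKmem] at hy ⊢
      obtain ⟨ha, hb, hc, hd⟩ := hy
      refine ⟨?_, ?_, ?_, ?_⟩
      · have h := adj1 e y; linarith
      · rw [hg₁]; exact ha
      · have h := adj1 (J₂ e) y; rw [← h₃₁₂ e] at h; linarith
      · have h := adj1 (J₃ e) y; rw [f6 e, map_neg, LinearMap.neg_apply] at h; linarith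
    have hJ₂K : ∀ y ∈ K, J₂ y ∈ K := by
      intro y hy
      rw [hKmem] at hy ⊢
      obtain ⟨ha, hb, hc, hd⟩ := hy
      refine ⟨?_, ?_, ?_, ?_⟩
      · have h := adj2 e y; linarith
      · have h := adj2 (J₁ e) y; rw [f5 e, map_neg, LinearMap.neg_apply] at h; linarith
      · rw [hg₂, ha, neg_zero]
      · have h := adj2 (J₃ e) y; rw [f2 e] at h; linarith
    have hJ₃K : ∀ y ∈ K, J₃ y ∈ K := by
      intro y hy
      rw [hKmem] at hy ⊢
      obtain ⟨ha, hb, hc, hd⟩ := hy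
      refine ⟨?_, ?_, ?_, ?_⟩
      · have h := adj3 e y; linarith
      · have h := adj3 (J₁ e) y; rw [f4 e] at h; linarith
      · have h := adj3 (J₂ e) y; rw [f3 e, map_neg, LinearMap.neg_apply] at h; linarith
      · rw [hg₃, ha, neg_zero]
    -- restricted structures on K
    set J₁' : K →ₗ[ℝ] K := J₁.restrict hJ₁K with hJ₁'
    set J₂' : K →ₗ[ℝ] K := J₂.restrict hJ₂K with hJ₂'
    set J₃' : K →ₗ[ℝ] K := J₃.restrict hJ₃K with hJ₃'
    set g' : K →ₗ[ℝ] K →ₗ[ℝ] ℝ := g.compl₁₂ K.subtype K.subtype with hg'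
    have hg'app : ∀ (y z : K), g' y z = g (y : V) (z : V) := by
      intro y z; rfl
    have hJ₁'app : ∀ y : K, ((J₁' y : K) : V) = J₁ (y : V) := by
      intro y; rfl
    have hJ₂'app : ∀ y : K, ((J₂' y : K) : V) = J₂ (y : V) := by
      intro y; rfl
    have hJ₃'app : ∀ y : K, ((J₃' y : K) : V) = J₃ (y : V) := by
      intro y; rfl
    have hnondeg' : ∀ y : K, (∀ z : K, g' y z = 0) → y = 0 := by
      intro y hy
      have hyV : (y : V) = 0 := by
        apply hnondeg
        intro z
        set p : V := g e z • e + g (J₁ e) z • J₁ e + (-(g (J₂ e) z)) • J₂ e +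
          (-(g (J₃ e) z)) • J₃ e with hp
        have hzp : z - p ∈ K := by
          rw [hKmem]
          refine ⟨?_, ?_, ?_, ?_⟩ <;>
            simp [hp, map_sub, map_add, map_smul, hee, he1, he2, he3, G10, G11, G12,
              G13, G20, G21, G22, G23, G30, G31, G32, G33]
        have hyK := (hKmem (y : V)).mp y.2
        have hyp : g (y : V) p = 0 := by
          have s0 : g (y : V) e = 0 := by rw [hgsym]; exact hyK.1
          have s1 : g (y : V) (J₁ e) = 0 := by rw [hgsym]; exact hyK.2.1
          have s2 : g (y : V) (J₂ e) = 0 := by rw [hgsym]; exact hyK.2.2.1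
          have s3 : g (y : V) (J₃ e) = 0 := by rw [hgsym]; exact hyK.2.2.2
          simp [hp, map_add, map_smul, s0, s1, s2, s3]
        have hzrest : g (y : V) (z - p) = 0 := by
          have := hy ⟨z - p, hzp⟩
          rw [hg'app] at this
          exact this
        have : g (y : V) z = g (y : V) (z - p) + g (y : V) p := by
          rw [← map_add, sub_add_cancel]
        rw [this, hyp, hzrest, add_zero]
      exact Subtype.ext (by simpa using hyV)
    obtain ⟨b', hb'orth, hb'pos, hb'neg⟩ :=
      ih K hrank J₁' J₂' J₃'
        (fun y => Subtype.ext (by simp [hJ₁'app, h₁]))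
        (fun y => Subtype.ext (by simp [hJ₂'app, h₂]))
        (fun y => Subtype.ext (by simp [hJ₃'app, h₃]))
        (fun y => Subtype.ext (by simp [hJ₁'app, hJ₂'app, a₁₂]))
        (fun y => Subtype.ext (by simp [hJ₁'app, hJ₃'app, a₁₃]))
        (fun y => Subtype.ext (by simp [hJ₂'app, hJ₃'app, a₂₃]))
        (fun y => Subtype.ext (by simp [hJ₁'app, hJ₂'app, hJ₃'app, h₃₁₂ (y : V)]))
        g'
        (fun y z => by rw [hg'app, hg'app, hgsym])
        hnondeg'
        (fun y z => by rw [hg'app, hg'app, hJ₁'app, hJ₁'app, hg₁])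
        (fun y z => by rw [hg'app, hg'app, hJ₂'app, hJ₂'app, hg₂])
        (fun y z => by rw [hg'app, hg'app, hJ₃'app, hJ₃'app, hg₃])
    -- assemble the basis
    set FL : Fin 2 ⊕ Fin (2 * n) → V :=
      Sum.elim ![e, J₁ e] (fun i => ((b' (Sum.inl i) : K) : V)) with hFL
    set FR : Fin 2 ⊕ Fin (2 * n) → V :=
      Sum.elim ![J₂ e, J₃ e] (fun i => ((b' (Sum.inr i) : K) : V)) with hFR
    set F : (Fin 2 ⊕ Fin (2 * n)) ⊕ (Fin 2 ⊕ Fin (2 * n)) → V := Sum.elim FL FR with hF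
    have hLK : ∀ (k : Fin 2) (v : V), v ∈ K → g (FL (Sum.inl k)) v = 0 := by
      intro k v hv
      have h := (hKmem v).mp hv
      fin_cases k
      · simpa [hFL] using h.1
      · simpa [hFL] using h.2.1
    have hRK : ∀ (k : Fin 2) (v : V), v ∈ K → g (FR (Sum.inl k)) v = 0 := by
      intro k v hv
      have h := (hKmem v).mp hv
      fin_cases k
      · simpa [hFR] using h.2.2.1
      · simpa [hFR] using h.2.2.2
    have hForth : ∀ i j, i ≠ j → g (F i) (F j) = 0 := by
      intro i j hij
      rcases i with (k | k) | (k | k) <;> rcases j with (l | l) | (l | l)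
      · fin_cases k <;> fin_cases l
        · exact absurd rfl hij
        · simpa [hF, hFL] using he1
        · simpa [hF, hFL] using G10
        · exact absurd rfl hij
      · exact hLK k _ (b' (Sum.inl l)).2
      · fin_cases k <;> fin_cases l
        · simpa [hF, hFL, hFR] using he2
        · simpa [hF, hFL, hFR] using he3
        · simpa [hF, hFL, hFR] using G12
        · simpa [hF, hFL, hFR] using G13
      · exact hLK k _ (b' (Sum.inr l)).2
      · rw [hgsym]; exact hLK l _ (b' (Sum.inl k)).2
      · have hkl : k ≠ l := by rintro rfl; exact hij rfl
        have h := hb'orth (Sum.inl k) (Sum.inl l) (by simpa using hkl)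
        rw [hg'app] at h; exact h
      · rw [hgsym]; exact hRK l _ (b' (Sum.inl k)).2
      · have h := hb'orth (Sum.inl k) (Sum.inr l) (by simp)
        rw [hg'app] at h; exact h
      · fin_cases k <;> fin_cases l
        · simpa [hF, hFL, hFR] using G20
        · simpa [hF, hFL, hFR] using G21
        · simpa [hF, hFL, hFR] using G30
        · simpa [hF, hFL, hFR] using G31
      · exact hRK k _ (b' (Sum.inl l)).2
      · fin_cases k <;> fin_cases l
        · exact absurd rfl hij
        · simpa [hF, hFR] using G23
        · simpa [hF, hFR] using G32
        · exact absurd rfl hij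
      · exact hRK k _ (b' (Sum.inr l)).2
      · rw [hgsym]; exact hLK l _ (b' (Sum.inr k)).2
      · have h := hb'orth (Sum.inr k) (Sum.inl l) (by simp)
        rw [hg'app] at h; exact h
      · rw [hgsym]; exact hRK l _ (b' (Sum.inr k)).2
      · have hkl : k ≠ l := by rintro rfl; exact hij rfl
        have h := hb'orth (Sum.inr k) (Sum.inr l) (by simpa using hkl)
        rw [hg'app] at h; exact h
    have hFpos : ∀ k, g (F (Sum.inl k)) (F (Sum.inl k)) = 1 := by
      intro k
      rcases k with k | k
      · fin_cases k
        · simpa [hF, hFL] using hee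
        · simpa [hF, hFL] using G11
      · have h := hb'pos k
        rw [hg'app] at h
        exact h
    have hFneg : ∀ k, g (F (Sum.inr k)) (F (Sum.inr k)) = -1 := by
      intro k
      rcases k with k | k
      · fin_cases k
        · simpa [hF, hFR] using G22
        · simpa [hF, hFR] using G33
      · have h := hb'neg k
        rw [hg'app] at h
        exact h
    have hFne : ∀ i, g (F i) (F i) ≠ 0 := by
      intro i
      rcases i with k | k
      · rw [hFpos k]; norm_num
      · rw [hFneg k]; norm_num
    have hcard : Fintype.card ((Fin 2 ⊕ Fin (2 * n)) ⊕ (Fin 2 ⊕ Fin (2 * n)))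
        = Module.finrank ℝ V := by
      simp only [Fintype.card_sum, Fintype.card_fin]
      omega
    set B := basisOfLinearIndependentOfCardEqFinrank (orth_li g F hFne hForth) hcard with hBdef
    have hB : ⇑B = F := coe_basisOfLinearIndependentOfCardEqFinrank _ _
    let E' : Fin 2 ⊕ Fin (2 * n) ≃ Fin (2 * (n + 1)) :=
      finSumFinEquiv.trans (finCongr (by omega))
    let E := Equiv.sumCongr E' E'
    refine ⟨B.reindex E, ?_, ?_, ?_⟩
    · intro i j hij
      rw [Basis.reindex_apply, Basis.reindex_apply, hB]
      exact hForth _ _ (fun h => hij (E.symm.injective h))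
    · intro i
      rw [Basis.reindex_apply, hB]
      have hsm : E.symm (Sum.inl i) = Sum.inl (E'.symm i) := rfl
      rw [hsm]
      exact hFpos _
    · intro i
      rw [Basis.reindex_apply, hB]
      have hsm : E.symm (Sum.inr i) = Sum.inr (E'.symm i) := rfl
      rw [hsm]
      exact hFneg _

/-- A pseudo-Hermitian metric on a `4n`-dimensional hypercomplex vector space
has signature `(2n, 2n)`. -/
theorem stmt_7 {V : Type*} [AddCommGroup V] [Module ℝ V] [FiniteDimensional ℝ V]
    {n : ℕ} (hdim : Module.finrank ℝ V = 4 * n)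
    (J₁ J₂ J₃ : V →ₗ[ℝ] V)
    (h₁ : ∀ x, J₁ (J₁ x) = -x)
    (h₂ : ∀ x, J₂ (J₂ x) = -x)
    (h₃ : ∀ x, J₃ (J₃ x) = -x)
    (a₁₂ : ∀ x, J₁ (J₂ x) = -J₂ (J₁ x))
    (a₁₃ : ∀ x, J₁ (J₃ x) = -J₃ (J₁ x))
    (a₂₃ : ∀ x, J₂ (J₃ x) = -J₃ (J₂ x))
    (h₃₁₂ : ∀ x, J₃ x = J₁ (J₂ x))
    (g : V →ₗ[ℝ] V →ₗ[ℝ] ℝ)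
    (hgsym : ∀ x y, g x y = g y x)
    (hnondeg : ∀ x, (∀ y, g x y = 0) → x = 0)
    (hg₁ : ∀ x y, g (J₁ x) (J₁ y) = g x y)
    (hg₂ : ∀ x y, g (J₂ x) (J₂ y) = -g x y)
    (hg₃ : ∀ x y, g (J₃ x) (J₃ y) = -g x y) :
    ∃ b : Basis (Fin (2 * n) ⊕ Fin (2 * n)) ℝ V,
      (∀ i j, i ≠ j → g (b i) (b j) = 0) ∧
      (∀ i, g (b (Sum.inl i)) (b (Sum.inl i)) = 1) ∧
      (∀ i, g (b (Sum.inr i)) (b (Sum.inr i)) = -1) :=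
  aux_sig n V hdim J₁ J₂ J₃ h₁ h₂ h₃ a₁₂ a₁₃ a₂₃ h₃₁₂ g hgsym hnondeg hg₁ hg₂ hg₃
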